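/- Let x ∈ {0,1}ⁿ, let t be a purchase decision tree satisfying Assumption 1 with leaf ℓ* reached by x, and for each product i define α_{t,i} = max{0, max_{ℓ∈left(i)} r_{t,ℓ} − r_{t,ℓ*}} if i ∈ RP(ℓ*) (else 0), β_{t,i} = max{0, max_{ℓ∈right(i)} r_{t,ℓ} − r_{t,ℓ*}} if i ∈ LP(ℓ*) (else 0), and γ_t = r_{t,ℓ*}. Then: (a) the indicator vector of ℓ* is feasible for the ProductMIO subproblem; (b) (α, β, γ) is feasible for its dual, i.e., Σ_{i∈LP(ℓ)} α_{t,i} + Σ_{i∈RP(ℓ)} β_{t,i} + γ_t ≥ r_{t,ℓ} for every leaf ℓ; and (c) both solutions attain objective value r_{t,ℓ*}, hence are optimal. -/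
import Mathlib


/-- A finite binary tree: each internal (split) node carries a product label. -/
inductive BTree (α : Type) where
  | leaf : BTree α
  | node : α → BTree α → BTree α → BTree α

namespace BTree

variable {α : Type}

/-- Paths (from the root, `true` = left) to the leaves of the tree. -/
def leavesF : BTree α → Finset (List Bool)
  | .leaf => {[]}
  | .node _ l r => (l.leavesF.image (List.cons true)) ∪ (r.leavesF.image (List.cons false))

/-- Paths to the split (internal) nodes of the tree. -/
def splitsF : BTree α → Finset (List Bool)
  | .leaf => ∅
  | .node _ l r =>
      insert [] ((l.splitsF.image (List.cons true)) ∪ (r.splitsF.image (List.cons false)))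

/-- The label (split product) of the node at a given path, if it is a split node. -/
def label : BTree α → List Bool → Option α
  | .leaf, _ => none
  | .node a _ _, [] => some a
  | .node _ l _, true :: p => l.label p
  | .node _ _ r, false :: p => r.label p

/-- `left(s)`: the leaves reachable by taking the left branch at split `s`. -/
def leftLeaves (t : BTree α) (s : List Bool) : Finset (List Bool) :=
  t.leavesF.filter (fun ℓ => s ++ [true] <+: ℓ)

/-- `right(s)`: the leaves reachable by taking the right branch at split `s`. -/
def rightLeaves (t : BTree α) (s : List Bool) : Finset (List Bool) :=
  t.leavesF.filter (fun ℓ => s ++ [false] <+: ℓ)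

end BTree


namespace BTree

/-- The leaf (path) reached by following the tree with binary assortment `x`
(go left at a split on product `a` iff `x a = true`). -/
def reach {α : Type} : BTree α → (α → Bool) → List Bool
  | .leaf, _ => []
  | .node a l r, x => if x a then true :: l.reach x else false :: r.reach x

end BTree

/-- The real value of `x` at an optional product: `1` if the product is in the assortment,
`0` otherwise. -/
def xOf {α : Type} (x : α → Bool) : Option α → ℝ
  | some a => if x a then 1 else 0
  | none => 0


namespace BTree

variable {α : Type} [DecidableEq α]

/-- `left(i)`: leaves requiring product `i` to be in the assortment in order to be reached,
i.e. the union of `left(s)` over splits `s` with product `i`. -/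
def leftP (t : BTree α) (i : α) : Finset (List Bool) :=
  (t.splitsF.filter (fun s => t.label s = some i)).biUnion (fun s => t.leftLeaves s)

/-- `right(i)`: leaves requiring product `i` to be excluded in order to be reached. -/
def rightP (t : BTree α) (i : α) : Finset (List Bool) :=
  (t.splitsF.filter (fun s => t.label s = some i)).biUnion (fun s => t.rightLeaves s)

end BTree


namespace BTree

variable {α : Type} [DecidableEq α]

lemma reach_mem_leavesF (t : BTree α) (x : α → Bool) : t.reach x ∈ t.leavesF := by
  induction t with
  | leaf => simp [reach, leavesF]
  | node a l r ihl ihr =>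
    simp only [reach, leavesF, Finset.mem_union, Finset.mem_image]
    by_cases h : x a
    · simp only [h, if_true]; exact Or.inl ⟨_, ihl, rfl⟩
    · simp only [h, if_false]; exact Or.inr ⟨_, ihr, rfl⟩

lemma mem_leftP_iff {t : BTree α} {i : α} {ℓ : List Bool} :
    ℓ ∈ t.leftP i ↔ ℓ ∈ t.leavesF ∧ ∃ s ∈ t.splitsF, t.label s = some i ∧ s ++ [true] <+: ℓ := by
  simp only [leftP, leftLeaves, Finset.mem_biUnion, Finset.mem_filter]
  aesop

lemma mem_rightP_iff {t : BTree α} {i : α} {ℓ : List Bool} :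
    ℓ ∈ t.rightP i ↔ ℓ ∈ t.leavesF ∧ ∃ s ∈ t.splitsF, t.label s = some i ∧ s ++ [false] <+: ℓ := by
  simp only [rightP, rightLeaves, Finset.mem_biUnion, Finset.mem_filter]
  aesop

lemma leftP_subset (t : BTree α) (i : α) : t.leftP i ⊆ t.leavesF :=
  fun _ h => (mem_leftP_iff.mp h).1

lemma rightP_subset (t : BTree α) (i : α) : t.rightP i ⊆ t.leavesF :=
  fun _ h => (mem_rightP_iff.mp h).1

lemma consistent (t : BTree α) (x : α → Bool) {s : List Bool} {b : Bool} {i : α}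
    (hs : s ∈ t.splitsF) (hl : t.label s = some i) (hp : s ++ [b] <+: t.reach x) :
    x i = b := by
  induction t generalizing s with
  | leaf => simp [splitsF] at hs
  | node a l r ihl ihr =>
    match s with
    | [] =>
      simp only [label, Option.some.injEq] at hl
      subst hl
      simp only [reach, List.nil_append] at hp
      by_cases h : x a
      · rw [h] at hp; simp only [if_true] at hp
        rw [List.cons_prefix_cons] at hp
        rw [h, hp.1]
      · simp only [Bool.not_eq_true] at h
        rw [h] at hp; simp only [Bool.false_eq_true, if_false, List.cons_prefix_cons] at hp
        rw [h, hp.1]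
    | true :: s' =>
      simp only [splitsF, Finset.mem_insert, Finset.mem_union, Finset.mem_image] at hs
      rcases hs with h | ⟨⟨u, hu, he⟩ | ⟨u, hu, he⟩⟩
      · exact absurd h (by simp)
      · simp only [List.cons.injEq, true_and] at he; subst he
        simp only [label] at hl
        simp only [reach] at hp
        by_cases h : x a
        · rw [h] at hp; simp only [if_true, List.cons_append, List.cons_prefix_cons] at hp
          exact ihl hu hl hp.2
        · simp only [Bool.not_eq_true] at h
          rw [h] at hp
          simp only [Bool.false_eq_true, if_false, List.cons_append, List.cons_prefix_cons] at hp
          exact absurd hp.1 (by simp)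
      · exact absurd he (by simp)
    | false :: s' =>
      simp only [splitsF, Finset.mem_insert, Finset.mem_union, Finset.mem_image] at hs
      rcases hs with h | ⟨⟨u, hu, he⟩ | ⟨u, hu, he⟩⟩
      · exact absurd h (by simp)
      · exact absurd he (by simp)
      · simp only [List.cons.injEq, true_and] at he; subst he
        simp only [label] at hl
        simp only [reach] at hp
        by_cases h : x a
        · rw [h] at hp; simp only [if_true, List.cons_append, List.cons_prefix_cons] at hp
          exact absurd hp.1 (by simp)
        · simp only [Bool.not_eq_true] at h
          rw [h] at hp
          simp only [Bool.false_eq_true, if_false, List.cons_append, List.cons_prefix_cons] at hp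
          exact ihr hu hl hp.2

lemma x_true_of_mem_leftP {t : BTree α} {x : α → Bool} {i : α}
    (h : t.reach x ∈ t.leftP i) : x i = true := by
  obtain ⟨-, s, hs, hl, hp⟩ := mem_leftP_iff.mp h
  exact consistent t x hs hl hp

lemma x_false_of_mem_rightP {t : BTree α} {x : α → Bool} {i : α}
    (h : t.reach x ∈ t.rightP i) : x i = false := by
  obtain ⟨-, s, hs, hl, hp⟩ := mem_rightP_iff.mp h
  exact consistent t x hs hl hp

end BTree

namespace BTree

variable {α : Type} [DecidableEq α]

lemma leftP_node_left {a : α} {l r : BTree α} {i : α} {ℓ : List Bool}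
    (h : ℓ ∈ l.leftP i) : (true :: ℓ) ∈ (BTree.node a l r).leftP i := by
  obtain ⟨hm, s, hs, hl, hp⟩ := mem_leftP_iff.mp h
  refine mem_leftP_iff.mpr ⟨?_, true :: s, ?_, ?_, ?_⟩
  · simp only [leavesF, Finset.mem_union, Finset.mem_image]
    exact Or.inl ⟨_, hm, rfl⟩
  · simp only [splitsF, Finset.mem_insert, Finset.mem_union, Finset.mem_image]
    exact Or.inr (Or.inl ⟨_, hs, rfl⟩)
  · simpa [label] using hl
  · simpa [List.cons_prefix_cons] using hp

lemma leftP_node_right {a : α} {l r : BTree α} {i : α} {ℓ : List Bool}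
    (h : ℓ ∈ r.leftP i) : (false :: ℓ) ∈ (BTree.node a l r).leftP i := by
  obtain ⟨hm, s, hs, hl, hp⟩ := mem_leftP_iff.mp h
  refine mem_leftP_iff.mpr ⟨?_, false :: s, ?_, ?_, ?_⟩
  · simp only [leavesF, Finset.mem_union, Finset.mem_image]
    exact Or.inr ⟨_, hm, rfl⟩
  · simp only [splitsF, Finset.mem_insert, Finset.mem_union, Finset.mem_image]
    exact Or.inr (Or.inr ⟨_, hs, rfl⟩)
  · simpa [label] using hl
  · simpa [List.cons_prefix_cons] using hp

lemma rightP_node_left {a : α} {l r : BTree α} {i : α} {ℓ : List Bool}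
    (h : ℓ ∈ l.rightP i) : (true :: ℓ) ∈ (BTree.node a l r).rightP i := by
  obtain ⟨hm, s, hs, hl, hp⟩ := mem_rightP_iff.mp h
  refine mem_rightP_iff.mpr ⟨?_, true :: s, ?_, ?_, ?_⟩
  · simp only [leavesF, Finset.mem_union, Finset.mem_image]
    exact Or.inl ⟨_, hm, rfl⟩
  · simp only [splitsF, Finset.mem_insert, Finset.mem_union, Finset.mem_image]
    exact Or.inr (Or.inl ⟨_, hs, rfl⟩)
  · simpa [label] using hl
  · simpa [List.cons_prefix_cons] using hp

lemma rightP_node_right {a : α} {l r : BTree α} {i : α} {ℓ : List Bool}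
    (h : ℓ ∈ r.rightP i) : (false :: ℓ) ∈ (BTree.node a l r).rightP i := by
  obtain ⟨hm, s, hs, hl, hp⟩ := mem_rightP_iff.mp h
  refine mem_rightP_iff.mpr ⟨?_, false :: s, ?_, ?_, ?_⟩
  · simp only [leavesF, Finset.mem_union, Finset.mem_image]
    exact Or.inr ⟨_, hm, rfl⟩
  · simp only [splitsF, Finset.mem_insert, Finset.mem_union, Finset.mem_image]
    exact Or.inr (Or.inr ⟨_, hs, rfl⟩)
  · simpa [label] using hl
  · simpa [List.cons_prefix_cons] using hp

lemma root_leftP {a : α} {l r : BTree α} {ℓ : List Bool} (h : ℓ ∈ l.leavesF) :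
    (true :: ℓ) ∈ (BTree.node a l r).leftP a := by
  refine mem_leftP_iff.mpr ⟨?_, [], ?_, rfl, ?_⟩
  · simp only [leavesF, Finset.mem_union, Finset.mem_image]
    exact Or.inl ⟨_, h, rfl⟩
  · simp [splitsF]
  · simp

lemma root_rightP {a : α} {l r : BTree α} {ℓ : List Bool} (h : ℓ ∈ r.leavesF) :
    (false :: ℓ) ∈ (BTree.node a l r).rightP a := by
  refine mem_rightP_iff.mpr ⟨?_, [], ?_, rfl, ?_⟩
  · simp only [leavesF, Finset.mem_union, Finset.mem_image]
    exact Or.inr ⟨_, h, rfl⟩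
  · simp [splitsF]
  · simp

lemma separation (t : BTree α) {ℓ L : List Bool} (hℓ : ℓ ∈ t.leavesF)
    (hL : L ∈ t.leavesF) (hne : ℓ ≠ L) :
    ∃ i, (ℓ ∈ t.leftP i ∧ L ∈ t.rightP i) ∨ (ℓ ∈ t.rightP i ∧ L ∈ t.leftP i) := by
  induction t generalizing ℓ L with
  | leaf =>
    simp only [leavesF, Finset.mem_singleton] at hℓ hL
    exact absurd (hℓ.trans hL.symm) hne
  | node a l r ihl ihr =>
    simp only [leavesF, Finset.mem_union, Finset.mem_image] at hℓ hL
    rcases hℓ with ⟨u, hu, rfl⟩ | ⟨u, hu, rfl⟩ <;>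
      rcases hL with ⟨v, hv, rfl⟩ | ⟨v, hv, rfl⟩
    · obtain ⟨i, h⟩ := ihl hu hv (fun h => hne (by rw [h]))
      exact ⟨i, h.imp (fun ⟨h1, h2⟩ => ⟨leftP_node_left h1, rightP_node_left h2⟩)
        (fun ⟨h1, h2⟩ => ⟨rightP_node_left h1, leftP_node_left h2⟩)⟩
    · exact ⟨a, Or.inl ⟨root_leftP hu, root_rightP hv⟩⟩
    · exact ⟨a, Or.inr ⟨root_rightP hu, root_leftP hv⟩⟩
    · obtain ⟨i, h⟩ := ihr hu hv (fun h => hne (by rw [h]))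
      exact ⟨i, h.imp (fun ⟨h1, h2⟩ => ⟨leftP_node_right h1, rightP_node_right h2⟩)
        (fun ⟨h1, h2⟩ => ⟨rightP_node_right h1, leftP_node_right h2⟩)⟩

end BTree

open Finset in
lemma sum_swap_helper {α : Type} [Fintype α] [DecidableEq α]
    (t : BTree α) (g : α → ℝ) (y' : List Bool → ℝ) (P : α → Finset (List Bool))
    (hP : ∀ i, P i ⊆ t.leavesF) :
    ∑ ℓ ∈ t.leavesF, (∑ i ∈ Finset.univ.filter (fun i => ℓ ∈ P i), g i) * y' ℓ
      = ∑ i : α, g i * ∑ ℓ ∈ P i, y' ℓ := by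
  calc ∑ ℓ ∈ t.leavesF, (∑ i ∈ Finset.univ.filter (fun i => ℓ ∈ P i), g i) * y' ℓ
      = ∑ ℓ ∈ t.leavesF, ∑ i : α, (if ℓ ∈ P i then g i * y' ℓ else 0) := by
        refine Finset.sum_congr rfl fun ℓ _ => ?_
        rw [Finset.sum_filter, Finset.sum_mul]
        exact Finset.sum_congr rfl fun i _ => by split <;> simp
    _ = ∑ i : α, ∑ ℓ ∈ t.leavesF, (if ℓ ∈ P i then g i * y' ℓ else 0) := Finset.sum_comm
    _ = ∑ i : α, ∑ ℓ ∈ P i, g i * y' ℓ := by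
        refine Finset.sum_congr rfl fun i _ => ?_
        rw [← Finset.sum_filter, Finset.filter_mem_eq_inter,
          Finset.inter_eq_right.mpr (hP i)]
    _ = ∑ i : α, g i * ∑ ℓ ∈ P i, y' ℓ := by
        simp [Finset.mul_sum]

/-- For binary `x`, a tree `t` satisfying Assumption 1, and reached leaf `ℓ* = reach t x`:
(a) the indicator vector of `ℓ*` is feasible for the ProductMIO subproblem;
(b) the closed-form dual solution
`α_i = max{0, max_{ℓ∈left(i)} r_ℓ - r_{ℓ*}}` for `i ∈ RP(ℓ*)` (else `0`),
`β_i = max{0, max_{ℓ∈right(i)} r_ℓ - r_{ℓ*}}` for `i ∈ LP(ℓ*)` (else `0`), `γ = r_{ℓ*}`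
is feasible for its dual; and
(c) both attain objective value `r_{ℓ*}`, hence both are optimal. -/
theorem productMIO_binary_closed_form {α : Type} [DecidableEq α] [Fintype α]
    (t : BTree α) (x : α → Bool) (r : List Bool → ℝ)
    (hA1 : ∀ s ∈ t.splitsF, ∀ s' ∈ t.splitsF, s <+: s' → s ≠ s' → t.label s ≠ t.label s') :
    let L := t.reach x
    let y : List Bool → ℝ := fun ℓ => if ℓ = L then 1 else 0
    let αd : α → ℝ := fun i =>
      if L ∈ t.rightP i then (t.leftP i).fold max 0 (fun ℓ => r ℓ - r L) else 0
    let βd : α → ℝ := fun i =>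
      if L ∈ t.leftP i then (t.rightP i).fold max 0 (fun ℓ => r ℓ - r L) else 0
    let γ : ℝ := r L
    -- (a) primal feasibility of the indicator of ℓ*
    ((∀ ℓ, 0 ≤ y ℓ) ∧ (∑ ℓ ∈ t.leavesF, y ℓ = 1) ∧
      (∀ i : α,
        (∑ ℓ ∈ t.leftP i, y ℓ ≤ (if x i then (1:ℝ) else 0)) ∧
        (∑ ℓ ∈ t.rightP i, y ℓ ≤ 1 - (if x i then (1:ℝ) else 0)))) ∧
    -- (b) dual feasibility
    ((∀ i, 0 ≤ αd i) ∧ (∀ i, 0 ≤ βd i) ∧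
      (∀ ℓ ∈ t.leavesF,
        (∑ i ∈ Finset.univ.filter (fun i => ℓ ∈ t.leftP i), αd i) +
        (∑ i ∈ Finset.univ.filter (fun i => ℓ ∈ t.rightP i), βd i) + γ ≥ r ℓ)) ∧
    -- (c) both objective values equal r_{ℓ*}, and the primal solution is optimal
    ((∑ ℓ ∈ t.leavesF, r ℓ * y ℓ = r L) ∧
      ((∑ i : α, αd i * (if x i then (1:ℝ) else 0)) +
        (∑ i : α, βd i * (1 - (if x i then (1:ℝ) else 0))) + γ = r L) ∧
      (∀ y' : List Bool → ℝ, (∀ ℓ, 0 ≤ y' ℓ) → (∑ ℓ ∈ t.leavesF, y' ℓ = 1) →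
        (∀ i : α,
          (∑ ℓ ∈ t.leftP i, y' ℓ ≤ (if x i then (1:ℝ) else 0)) ∧
          (∑ ℓ ∈ t.rightP i, y' ℓ ≤ 1 - (if x i then (1:ℝ) else 0))) →
        ∑ ℓ ∈ t.leavesF, r ℓ * y' ℓ ≤ r L)) := by
  intro L y αd βd γ
  have hLdef : L = t.reach x := rfl
  have hydef : ∀ ℓ, y ℓ = if ℓ = L then (1:ℝ) else 0 := fun _ => rfl
  have hαdef : ∀ i, αd i =
      if L ∈ t.rightP i then (t.leftP i).fold max 0 (fun ℓ => r ℓ - r L) else 0 := fun _ => rfl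
  have hβdef : ∀ i, βd i =
      if L ∈ t.leftP i then (t.rightP i).fold max 0 (fun ℓ => r ℓ - r L) else 0 := fun _ => rfl
  have hγdef : γ = r L := rfl
  have hLmem : L ∈ t.leavesF := hLdef ▸ t.reach_mem_leavesF x
  have hxleft : ∀ i, L ∈ t.leftP i → x i = true := fun i h =>
    BTree.x_true_of_mem_leftP (hLdef ▸ h)
  have hxright : ∀ i, L ∈ t.rightP i → x i = false := fun i h =>
    BTree.x_false_of_mem_rightP (hLdef ▸ h)
  have hysum : ∀ S : Finset (List Bool), ∑ ℓ ∈ S, y ℓ = if L ∈ S then (1:ℝ) else 0 := by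
    intro S
    rw [show (∑ ℓ ∈ S, y ℓ) = ∑ ℓ ∈ S, if ℓ = L then (1:ℝ) else 0 from
      Finset.sum_congr rfl (fun ℓ _ => hydef ℓ)]
    exact Finset.sum_ite_eq' S L (fun _ => (1:ℝ))
  have hynn : ∀ ℓ, 0 ≤ y ℓ := by
    intro ℓ; rw [hydef]; split <;> norm_num
  have hαnn : ∀ i, 0 ≤ αd i := by
    intro i; rw [hαdef]; split
    · exact Finset.le_fold_max (0:ℝ) |>.mpr (Or.inl le_rfl)
    · exact le_refl 0
  have hβnn : ∀ i, 0 ≤ βd i := by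
    intro i; rw [hβdef]; split
    · exact Finset.le_fold_max (0:ℝ) |>.mpr (Or.inl le_rfl)
    · exact le_refl 0
  have hαbound : ∀ i ℓ, ℓ ∈ t.leftP i → L ∈ t.rightP i → r ℓ - r L ≤ αd i := by
    intro i ℓ h1 h2
    rw [hαdef, if_pos h2]
    exact Finset.le_fold_max _ |>.mpr (Or.inr ⟨ℓ, h1, le_rfl⟩)
  have hβbound : ∀ i ℓ, ℓ ∈ t.rightP i → L ∈ t.leftP i → r ℓ - r L ≤ βd i := by
    intro i ℓ h1 h2
    rw [hβdef, if_pos h2]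
    exact Finset.le_fold_max _ |>.mpr (Or.inr ⟨ℓ, h1, le_rfl⟩)
  -- (b) dual feasibility main inequality
  have hdualfeas : ∀ ℓ ∈ t.leavesF,
      (∑ i ∈ Finset.univ.filter (fun i => ℓ ∈ t.leftP i), αd i) +
      (∑ i ∈ Finset.univ.filter (fun i => ℓ ∈ t.rightP i), βd i) + γ ≥ r ℓ := by
    intro ℓ hℓ
    have hA : 0 ≤ ∑ i ∈ Finset.univ.filter (fun i => ℓ ∈ t.leftP i), αd i :=
      Finset.sum_nonneg fun i _ => hαnn i
    have hB : 0 ≤ ∑ i ∈ Finset.univ.filter (fun i => ℓ ∈ t.rightP i), βd i :=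
      Finset.sum_nonneg fun i _ => hβnn i
    by_cases he : ℓ = L
    · subst he; rw [hγdef]; linarith
    · obtain ⟨i, hi⟩ := t.separation hℓ hLmem he
      rcases hi with ⟨h1, h2⟩ | ⟨h1, h2⟩
      · have hmem : i ∈ Finset.univ.filter (fun i => ℓ ∈ t.leftP i) := by
          simp [h1]
        have := Finset.single_le_sum (f := αd) (fun j _ => hαnn j) hmem
        have := hαbound i ℓ h1 h2
        rw [hγdef]; linarith
      · have hmem : i ∈ Finset.univ.filter (fun i => ℓ ∈ t.rightP i) := by
          simp [h1]
        have := Finset.single_le_sum (f := βd) (fun j _ => hβnn j) hmem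
        have := hβbound i ℓ h1 h2
        rw [hγdef]; linarith
  -- dual objective
  have hdualobj : (∑ i : α, αd i * (if x i then (1:ℝ) else 0)) +
      (∑ i : α, βd i * (1 - (if x i then (1:ℝ) else 0))) + γ = r L := by
    have h1 : ∀ i : α, αd i * (if x i then (1:ℝ) else 0) = 0 := by
      intro i
      by_cases h : L ∈ t.rightP i
      · rw [hxright i h]; simp
      · rw [hαdef, if_neg h, zero_mul]
    have h2 : ∀ i : α, βd i * (1 - (if x i then (1:ℝ) else 0)) = 0 := by
      intro i
      by_cases h : L ∈ t.leftP i
      · rw [hxleft i h]; simp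
      · rw [hβdef, if_neg h, zero_mul]
    rw [Finset.sum_eq_zero (fun i _ => h1 i), Finset.sum_eq_zero (fun i _ => h2 i), hγdef]
    ring
  refine ⟨⟨hynn, ?_, ?_⟩, ⟨hαnn, hβnn, hdualfeas⟩, ?_, hdualobj, ?_⟩
  · rw [hysum, if_pos hLmem]
  · -- primal feasibility constraints
    intro i
    constructor
    · rw [hysum]
      by_cases h : L ∈ t.leftP i
      · rw [if_pos h, hxleft i h]; simp
      · rw [if_neg h]; split <;> norm_num
    · rw [hysum]
      by_cases h : L ∈ t.rightP i
      · rw [if_pos h, hxright i h]; simp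
      · rw [if_neg h]; split <;> norm_num
  · -- primal objective
    rw [show (∑ ℓ ∈ t.leavesF, r ℓ * y ℓ) = ∑ ℓ ∈ t.leavesF, if ℓ = L then r ℓ else 0 from
      Finset.sum_congr rfl (fun ℓ _ => by rw [hydef]; split <;> simp)]
    rw [Finset.sum_ite_eq' t.leavesF L r, if_pos hLmem]
  · -- weak duality / optimality
    intro y' hy0 hy1 hyc
    calc ∑ ℓ ∈ t.leavesF, r ℓ * y' ℓ
        ≤ ∑ ℓ ∈ t.leavesF,
            ((∑ i ∈ Finset.univ.filter (fun i => ℓ ∈ t.leftP i), αd i) +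
             (∑ i ∈ Finset.univ.filter (fun i => ℓ ∈ t.rightP i), βd i) + γ) * y' ℓ :=
          Finset.sum_le_sum fun ℓ hℓ =>
            mul_le_mul_of_nonneg_right (hdualfeas ℓ hℓ) (hy0 ℓ)
      _ = (∑ i : α, αd i * ∑ ℓ ∈ t.leftP i, y' ℓ) +
          (∑ i : α, βd i * ∑ ℓ ∈ t.rightP i, y' ℓ) + γ := by
          simp only [add_mul, Finset.sum_add_distrib]
          rw [sum_swap_helper t αd y' (fun i => t.leftP i) (fun i => t.leftP_subset i),
            sum_swap_helper t βd y' (fun i => t.rightP i) (fun i => t.rightP_subset i),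
            ← Finset.mul_sum, hy1, mul_one]
      _ ≤ (∑ i : α, αd i * (if x i then (1:ℝ) else 0)) +
          (∑ i : α, βd i * (1 - (if x i then (1:ℝ) else 0))) + γ := by
          gcongr with i _ i _
          · exact hαnn i
          · exact (hyc i).1
          · exact hβnn i
          · exact (hyc i).2
      _ = r L := hdualobj
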